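/- arXiv:2411.07587 — 3 statements merged into one kernel-verified Lean document; each statement's English description precedes it below -/
import Mathlib

section
/- Let k ∈ ℕ and let h be a smooth real function on a neighborhood of 0 ∈ ℝ with h(0) > 0. Define ψ(x) = x·h(x)^{1/(k+1)} on the set where h > 0 and φ(x,y) = (ψ(x), y). Then ψ(0) = 0, ψ'(0) = h(0)^{1/(k+1)} ≠ 0, so φ is a local diffeomorphism of ℝ² at the origin fixing the origin which preserves the second coordinate (hence φ*(dy) = dy), and (y − x^{k+1}) ∘ φ = y − x^{k+1}·h(x) on a neighborhood of 0 ∈ ℝ². -/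
/-!
`ψ` is smooth wherever `h > 0`, and since `ψ(x) = x · g(x)` with `g = h^{1/(k+1)}`, its
derivative at `0` is `g(0) = h(0)^{1/(k+1)} > 0`; by continuity of `ψ'` it stays nonzero on a
neighbourhood `U` of `0`. On `U × ℝ` the map `φ = ψ × id` has Jacobian
`diag(ψ'(x), 1)`, whose determinant is `ψ'(x) ≠ 0` and whose second row is `dy`.
Finally `ψ(x)^{k+1} = x^{k+1} · (h(x)^{1/(k+1)})^{k+1} = x^{k+1} h(x)`.
-/

noncomputable section

open Set ContinuousLinearMap

section ProdMapId

variable {𝕜 : Type*} [NontriviallyNormedField 𝕜]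
  {E : Type*} [NormedAddCommGroup E] [NormedSpace 𝕜 E]

theorem snd_comp_prodMap {F G H : Type*} [NormedAddCommGroup F] [NormedSpace 𝕜 F]
    [NormedAddCommGroup G] [NormedSpace 𝕜 G] [NormedAddCommGroup H] [NormedSpace 𝕜 H]
    (f : E →L[𝕜] F) (g : G →L[𝕜] H) :
    (snd 𝕜 F H).comp (f.prodMap g) = g.comp (snd 𝕜 E G) :=
  rfl

theorem det_toSpanSingleton_prodMap_id [FiniteDimensional 𝕜 E] (a : 𝕜) :
    ((toSpanSingleton 𝕜 a).prodMap (ContinuousLinearMap.id 𝕜 E)).det = a := by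
  rw [ContinuousLinearMap.det, coe_prodMap, LinearMap.det_prodMap, coe_id, LinearMap.det_id,
    mul_one, ← ContinuousLinearMap.det, det_toSpanSingleton]

theorem fderiv_prodMap_id {f : 𝕜 → 𝕜} {p : 𝕜 × E} (hf : DifferentiableAt 𝕜 f p.1) :
    fderiv 𝕜 (Prod.map f id) p =
      (toSpanSingleton 𝕜 (deriv f p.1)).prodMap (ContinuousLinearMap.id 𝕜 E) :=
  (hf.hasDerivAt.hasFDerivAt.prodMap p (hasFDerivAt_id p.2)).fderiv

end ProdMapId

theorem ContDiffOn.exists_isOpen_deriv_ne_zero {𝕜 : Type*} [NontriviallyNormedField 𝕜]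
    {f : 𝕜 → 𝕜} {U : Set 𝕜} {x : 𝕜} {n : WithTop ℕ∞} (hf : ContDiffOn 𝕜 n f U) (hn : 1 ≤ n)
    (hU : IsOpen U) (hx : x ∈ U) (hfx : deriv f x ≠ 0) :
    ∃ U' ⊆ U, IsOpen U' ∧ x ∈ U' ∧ ∀ y ∈ U', deriv f y ≠ 0 :=
  ⟨U ∩ deriv f ⁻¹' {0}ᶜ, inter_subset_left,
    (hf.continuousOn_deriv_of_isOpen hU hn).isOpen_inter_preimage hU isOpen_compl_singleton,
    ⟨hx, hfx⟩, fun _ hy => hy.2⟩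

theorem hasDerivAt_id_mul_at_zero {𝕜 : Type*} [NontriviallyNormedField 𝕜] {g : 𝕜 → 𝕜}
    (hg : DifferentiableAt 𝕜 g 0) : HasDerivAt (fun x => x * g x) (g 0) 0 := by
  simpa using (hasDerivAt_id' (0 : 𝕜)).fun_mul hg.hasDerivAt

theorem Real.rpow_one_div_succ_pow {x : ℝ} (hx : 0 ≤ x) (k : ℕ) :
    (x ^ (1 / (k + 1 : ℝ))) ^ (k + 1) = x := by
  simpa using Real.rpow_inv_natCast_pow hx k.succ_ne_zero

/-- For `h` smooth near `0 ∈ ℝ` with `h(0) > 0`, the map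
`φ(x,y) = (x·h(x)^{1/(k+1)}, y)` is a local diffeomorphism at the origin, fixing the
origin, preserving the second coordinate (hence `φ*(dy) = dy`), and
`(y − x^{k+1}) ∘ φ = y − x^{k+1}·h(x)` near the origin. -/
theorem stmt_5 (k : ℕ) (V : Set ℝ) (hVo : IsOpen V) (hV0 : (0 : ℝ) ∈ V)
    (h : ℝ → ℝ) (hh : ContDiffOn ℝ (⊤ : ℕ∞) h V) (h0 : 0 < h 0)
    (ψ : ℝ → ℝ) (hψdef : ∀ x, ψ x = x * h x ^ (1 / (k + 1 : ℝ)))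
    (φ : ℝ × ℝ → ℝ × ℝ) (hφdef : ∀ p : ℝ × ℝ, φ p = (ψ p.1, p.2)) :
    ψ 0 = 0 ∧
    deriv ψ 0 = h 0 ^ (1 / (k + 1 : ℝ)) ∧
    h 0 ^ (1 / (k + 1 : ℝ)) ≠ 0 ∧
    ∃ W : Set (ℝ × ℝ), IsOpen W ∧ (0 : ℝ × ℝ) ∈ W ∧
      ContDiffOn ℝ (⊤ : ℕ∞) φ W ∧ φ 0 = 0 ∧
      (∀ p ∈ W, (fderiv ℝ φ p).det ≠ 0) ∧
      (∀ p ∈ W, (φ p).2 = p.2) ∧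
      (∀ p ∈ W, (ContinuousLinearMap.snd ℝ ℝ ℝ).comp (fderiv ℝ φ p) =
        ContinuousLinearMap.snd ℝ ℝ ℝ) ∧
      (∀ p ∈ W, (φ p).2 - (φ p).1 ^ (k + 1) = p.2 - p.1 ^ (k + 1) * h p.1) := by
  have hψ : ψ = fun x => x * h x ^ (1 / (k + 1 : ℝ)) := funext hψdef
  have hφ : φ = Prod.map ψ id := funext hφdef
  set U₀ := V ∩ h ⁻¹' Ioi 0
  have hU₀ : IsOpen U₀ := hh.continuousOn.isOpen_inter_preimage hVo isOpen_Ioi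
  have hψU₀ : ContDiffOn ℝ (⊤ : ℕ∞) ψ U₀ := hψ ▸ contDiffOn_id.mul
    ((hh.mono inter_subset_left).rpow_const_of_ne fun x hx => hx.2.ne')
  have hψ'0 : HasDerivAt ψ (h 0 ^ (1 / (k + 1 : ℝ))) 0 := hψ ▸ hasDerivAt_id_mul_at_zero
    (((hh.contDiffAt (hVo.mem_nhds hV0)).differentiableAt (by simp)).rpow_const (Or.inl h0.ne'))
  have hne : h 0 ^ (1 / (k + 1 : ℝ)) ≠ 0 := (Real.rpow_pos_of_pos h0 _).ne'
  obtain ⟨U, hUU₀, hU, hU0, hψ'U⟩ := hψU₀.exists_isOpen_deriv_ne_zero (by simp) hU₀ ⟨hV0, h0⟩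
    (hψ'0.deriv ▸ hne)
  have hψdiff : ∀ p ∈ U ×ˢ (univ : Set ℝ), DifferentiableAt ℝ ψ p.1 := fun p hp =>
    (hψU₀.contDiffAt (hU₀.mem_nhds (hUU₀ hp.1))).differentiableAt (by simp)
  refine ⟨by simp [hψdef], hψ'0.deriv, hne, U ×ˢ univ, hU.prod isOpen_univ, ⟨hU0, trivial⟩,
    hφ ▸ (hψU₀.mono hUU₀).prodMap contDiffOn_id, by simp [hφdef, hψdef], ?_, fun p _ => by
    rw [hφdef], ?_, ?_⟩
  · intro p hp
    rw [hφ, fderiv_prodMap_id (hψdiff p hp), det_toSpanSingleton_prodMap_id]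
    exact hψ'U _ hp.1
  · intro p hp
    rw [hφ, fderiv_prodMap_id (hψdiff p hp), snd_comp_prodMap, id_comp]
  · intro p hp
    rw [hφdef, hψdef, mul_pow, Real.rpow_one_div_succ_pow (hUU₀ hp.1).2.le]
end
end

section
/- Let k ≥ 0 be an integer and let f be a smooth function on a neighborhood of 0 ∈ ℝ² with f(0,0) = 0, ∂f/∂y(0,0) ≠ 0, and such that the one-variable function x ↦ f(x,0) has all derivatives of order ≤ k equal to 0 at x = 0 and nonzero derivative of order k+1 at x = 0 (so the zero curve of f is regular at the origin and has contact of order k with the x-axis). Then there exist a local diffeomorphism φ at 0 with φ(0) = 0 and smooth nonvanishing functions κ, λ near 0 such that dy = κ·φ*(dy) and f = λ·((y − x^{k+1}) ∘ φ) on a neighborhood of the origin. Consequently, the vector field f·X is orbitally dy-conjugate to the vector field (y − x^{k+1})·X, where X = −∂/∂x, i.e. X(x,y) = (−1, 0), is the vector field in the kernel of dy. -/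
/-!
Hadamard's lemma, applied once in `y` and `k + 1` times in `x`, writes
`f = x ^ (k + 1) * b x + y * q (x, y)` near `0`, where `(k + 1)! * b 0` is the nonvanishing
`(k + 1)`-st derivative of `x ↦ f (x, 0)` and `q 0 = ∂f/∂y (0)`. For the sign `e = ±1` making
`m = -e * b / q` positive near `0` and `r = m ^ (1 / (k + 1))`, this reads
`f = e * q * (e * y - (x * r) ^ (k + 1))`, so `φ (x, y) = (x * r, e * y)` does the job:
`dy ∘ Dφ = e • dy`, and `Dφ` is triangular with diagonal `(∂ₓ (x * r), e)`, hence maps the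
kernel direction `(-1, 0)` of `dy` to a multiple of itself.
-/

open Set Filter Topology

universe u

section ParametricIntegral

variable {P E : Type u} [NormedAddCommGroup P] [NormedSpace ℝ P] [ProperSpace P]
  [NormedAddCommGroup E] [NormedSpace ℝ E]

theorem hasFDerivAt_parametric_intervalIntegral_of_contDiff {F : P → ℝ → E}
    (hF : ContDiff ℝ 1 (Function.uncurry F)) (a b : ℝ) (p₀ : P) :
    HasFDerivAt (fun p => ∫ t in a..b, F p t)
      (∫ t in a..b, fderiv ℝ (Function.uncurry F) (p₀, t) ∘L ContinuousLinearMap.inl ℝ P ℝ)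
      p₀ := by
  set F' : P → ℝ → P →L[ℝ] E := fun p t =>
    fderiv ℝ (Function.uncurry F) (p, t) ∘L ContinuousLinearMap.inl ℝ P ℝ
  have hFc : Continuous (Function.uncurry F) := hF.continuous
  have hF'c : Continuous (Function.uncurry F') :=
    (hF.continuous_fderiv one_ne_zero).clm_comp continuous_const
  obtain ⟨M, hM⟩ := ((isCompact_closedBall p₀ 1).prod (isCompact_uIcc (a := a) (b := b))
    ).exists_bound_of_continuousOn hF'c.continuousOn
  refine intervalIntegral.hasFDerivAt_integral_of_dominated_of_fderiv_le
    (μ := MeasureTheory.volume) (F' := F') (bound := fun _ => M)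
    (Metric.ball_mem_nhds p₀ one_pos) (Eventually.of_forall fun p => ?_)
    ((hFc.uncurry_left p₀).intervalIntegrable a b) ?_ ?_ intervalIntegrable_const ?_
  · exact (hFc.uncurry_left p).aestronglyMeasurable
  · exact (hF'c.uncurry_left p₀).aestronglyMeasurable
  · exact Eventually.of_forall fun t ht p hp =>
      hM (p, t) ⟨Metric.ball_subset_closedBall hp, uIoc_subset_uIcc ht⟩
  · refine Eventually.of_forall fun t _ p _ => ?_
    exact ((hF.differentiable one_ne_zero) (p, t)).hasFDerivAt.comp (𝕜 := ℝ) p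
      (hasFDerivAt_prodMk_left p t)

theorem contDiff_parametric_intervalIntegral_of_contDiff {n : ℕ∞} {F : P → ℝ → E}
    (hF : ContDiff ℝ n (Function.uncurry F)) (a b : ℝ) :
    ContDiff ℝ n fun p => ∫ t in a..b, F p t := by
  suffices ∀ (m : ℕ) {E : Type u} [NormedAddCommGroup E] [NormedSpace ℝ E]
      {F : P → ℝ → E}, ContDiff ℝ m (Function.uncurry F) →
      ContDiff ℝ m fun p => ∫ t in a..b, F p t by
    induction n with
    | top => exact contDiff_infty.2 fun m => this m (hF.of_le (by exact_mod_cast le_top))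
    | coe m => exact this m hF
  intro m
  induction m with
  | zero =>
    intro E _ _ F hF
    exact contDiff_zero.2 (intervalIntegral.continuous_parametric_intervalIntegral_of_continuous'
      (contDiff_zero.1 hF) a b)
  | succ m ih =>
    intro E _ _ F hF
    have hF1 : ContDiff ℝ 1 (Function.uncurry F) := hF.of_le (by exact_mod_cast le_add_self)
    have hderiv := hasFDerivAt_parametric_intervalIntegral_of_contDiff hF1 a b
    rw [Nat.cast_succ, contDiff_succ_iff_fderiv]
    refine ⟨fun p => (hderiv p).differentiableAt, by simp, ?_⟩
    rw [funext fun p => (hderiv p).fderiv]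
    exact ih ((hF.fderiv_right le_rfl).clm_comp contDiff_const)

end ParametricIntegral

section Hadamard

variable {E F : Type u} [NormedAddCommGroup E] [NormedSpace ℝ E] [ProperSpace E]
  [NormedAddCommGroup F] [NormedSpace ℝ F] [CompleteSpace F]

theorem exists_contDiff_eq_add_snd_smul {n : ℕ∞} {f : E × ℝ → F}
    (hf : ContDiff ℝ (n + 1) f) :
    ∃ q : E × ℝ → F, ContDiff ℝ n q ∧ (∀ p, f p = f (p.1, 0) + p.2 • q p) ∧
      ∀ x, q (x, 0) = fderiv ℝ f (x, 0) (0, 1) := by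
  set G : E × ℝ → ℝ → F := fun p t => fderiv ℝ f (p.1, t * p.2) (0, 1)
  have hG : ContDiff ℝ n (Function.uncurry G) :=
    ((hf.fderiv_right le_rfl).comp (contDiff_fst.fst.prodMk (contDiff_snd.mul contDiff_fst.snd))
      ).clm_apply contDiff_const
  refine ⟨fun p => ∫ t in (0 : ℝ)..1, G p t,
    contDiff_parametric_intervalIntegral_of_contDiff hG 0 1, fun p => ?_, fun x => by simp [G]⟩
  have hderiv : ∀ t ∈ uIcc (0 : ℝ) 1,
      HasDerivAt (fun s => f (p.1, s * p.2)) (p.2 • G p t) t := by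
    intro t _
    have hline : HasDerivAt (fun s : ℝ => (p.1, s * p.2)) ((0 : E), p.2) t :=
      (hasDerivAt_const t p.1).prodMk (by simpa using (hasDerivAt_id t).mul_const p.2)
    have h :=
      ((hf.differentiable (by simp)) (p.1, t * p.2)).hasFDerivAt.comp_hasDerivAt t hline
    rwa [show ((0 : E), p.2) = p.2 • ((0 : E), (1 : ℝ)) by simp, map_smul] at h
  have hint : IntervalIntegrable (fun t => p.2 • G p t) MeasureTheory.volume 0 1 :=
    ((hG.continuous.uncurry_left p).const_smul p.2).intervalIntegrable 0 1
  have hFTC := intervalIntegral.integral_eq_sub_of_hasDerivAt hderiv hint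
  rw [intervalIntegral.integral_smul] at hFTC
  simp [hFTC]

end Hadamard

theorem exists_contDiff_eq_add_smul {F : Type} [NormedAddCommGroup F] [NormedSpace ℝ F]
    [CompleteSpace F] {n : ℕ∞} {g : ℝ → F} (hg : ContDiff ℝ (n + 1) g) :
    ∃ b : ℝ → F, ContDiff ℝ n b ∧ ∀ x, g x = g 0 + x • b x := by
  obtain ⟨q, hq, hgq, -⟩ := exists_contDiff_eq_add_snd_smul (E := ℝ) (hg.comp contDiff_snd)
  exact ⟨fun x => q (0, x), hq.comp (contDiff_const.prodMk contDiff_id), fun x => hgq (0, x)⟩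

open Nat in
theorem iteratedDeriv_pow_mul_zero {b : ℝ → ℝ} (k : ℕ) (hb : ContDiffAt ℝ k b 0) :
    iteratedDeriv k (fun x => x ^ k * b x) 0 = k ! * b 0 := by
  rw [iteratedDeriv_fun_mul (by fun_prop : ContDiffAt ℝ k (fun x : ℝ => x ^ k) 0) hb,
    Finset.sum_eq_single_of_mem k (Finset.self_mem_range_succ k) fun i _ hik => by
      rw [iteratedDeriv_fun_pow_zero, if_neg hik, Nat.cast_zero, mul_zero, zero_mul]]
  rw [iteratedDeriv_fun_pow_zero, if_pos rfl, Nat.choose_self, Nat.sub_self, iteratedDeriv_zero]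
  simp

theorem exists_contDiff_eq_pow_mul_of_iteratedDeriv_eq_zero {g : ℝ → ℝ}
    (hg : ContDiff ℝ (⊤ : ℕ∞) g) (k : ℕ) (hflat : ∀ n < k, iteratedDeriv n g 0 = 0) :
    ∃ b : ℝ → ℝ, ContDiff ℝ (⊤ : ℕ∞) b ∧ ∀ x, g x = x ^ k * b x := by
  induction k with
  | zero => exact ⟨g, hg, by simp⟩
  | succ k ih =>
    obtain ⟨b, hb, hgb⟩ := ih fun n hn => hflat n (Nat.lt_succ_of_lt hn)
    have hb0 : b 0 = 0 := by
      have h := hflat k k.lt_succ_self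
      rw [funext hgb,
        iteratedDeriv_pow_mul_zero k (hb.contDiffAt.of_le (by exact_mod_cast le_top))] at h
      simpa [Nat.factorial_ne_zero] using h
    obtain ⟨b₁, hb₁, hbb₁⟩ := exists_contDiff_eq_add_smul (n := ⊤) (by simpa using hb)
    exact ⟨b₁, hb₁, fun x => by rw [hgb, hbb₁, hb0, pow_succ]; simp [mul_assoc]⟩

theorem ContDiffOn.exists_contDiff_eventuallyEq {E F : Type*} [NormedAddCommGroup E]
    [NormedSpace ℝ E] [HasContDiffBump E] [NormedAddCommGroup F] [NormedSpace ℝ F] {n : ℕ∞}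
    {f : E → F} {U : Set E} {x : E} (hU : IsOpen U) (hx : x ∈ U) (hf : ContDiffOn ℝ n f U) :
    ∃ g : E → F, ContDiff ℝ n g ∧ g =ᶠ[𝓝 x] f := by
  obtain ⟨R, hR, hRU⟩ := Metric.nhds_basis_closedBall.mem_iff.1 (hU.mem_nhds hx)
  let χ : ContDiffBump x := ⟨R / 2, R, half_pos hR, half_lt_self hR⟩
  refine ⟨fun y => χ y • f y, contDiff_iff_contDiffAt.2 fun y => ?_, ?_⟩
  · by_cases hy : y ∈ U
    · exact χ.contDiff.contDiffAt.smul (hf.contDiffAt (hU.mem_nhds hy))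
    · have hχ : (χ : E → ℝ) =ᶠ[𝓝 y] 0 := by
        rw [← notMem_tsupport_iff_eventuallyEq, χ.tsupport_eq]
        exact fun h => hy (hRU h)
      exact (contDiffAt_const (c := (0 : F))).congr_of_eventuallyEq
        (hχ.mono fun z hz => by simp [hz])
  · filter_upwards [χ.eventuallyEq_one] with y hy
    simp [hy]

theorem ContinuousLinearMap.isInvertible_of_injective {𝕜 E : Type*} [NontriviallyNormedField 𝕜]
    [CompleteSpace 𝕜] [NormedAddCommGroup E] [NormedSpace 𝕜 E] [FiniteDimensional 𝕜 E]
    {A : E →L[𝕜] E} (hA : Function.Injective A) : A.IsInvertible :=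
  ⟨(LinearEquiv.ofInjectiveEndo (A : E →ₗ[𝕜] E) hA).toContinuousLinearEquiv, rfl⟩

theorem ContinuousLinearMap.IsInvertible.det_ne_zero {𝕜 E : Type*} [Field 𝕜]
    [TopologicalSpace E] [AddCommGroup E] [Module 𝕜 E] [FiniteDimensional 𝕜 E]
    {A : E →L[𝕜] E} (hA : A.IsInvertible) : A.det ≠ 0 := by
  obtain ⟨A, rfl⟩ := hA
  exact A.toLinearEquiv.isUnit_det'.ne_zero

open ContinuousLinearMap in
theorem injective_of_snd_comp_eq_smul_snd {A : ℝ × ℝ →L[ℝ] ℝ × ℝ} {α e : ℝ} (hα : α ≠ 0)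
    (he : e ≠ 0) (hsnd : snd ℝ ℝ ℝ ∘L A = e • snd ℝ ℝ ℝ) (hfst : A (1, 0) = (α, 0)) :
    Function.Injective A := by
  rw [injective_iff_map_eq_zero]
  intro v hv
  have hv2 : v.2 = 0 := by
    have h : e * v.2 = 0 := by simpa [hv] using (congrArg (fun L => L v) hsnd).symm
    exact (mul_eq_zero.1 h).resolve_left he
  have hv1 : v.1 * α = 0 := by
    have h : A v = v.1 • (α, 0) := by
      rw [← hfst, ← map_smul]; congr 1; ext <;> simp [hv2]
    simpa [hv] using congrArg Prod.fst h
  ext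
  · exact (mul_eq_zero.1 hv1).resolve_right hα
  · exact hv2

def KDyEquivalentToNormalForm (k : ℕ) (f : ℝ × ℝ → ℝ) : Prop :=
  ∃ (φ : ℝ × ℝ → ℝ × ℝ) (W : Set (ℝ × ℝ)) (κ lam : ℝ × ℝ → ℝ),
    IsOpen W ∧ (0 : ℝ × ℝ) ∈ W ∧ φ 0 = 0 ∧
    ContDiffOn ℝ (⊤ : ℕ∞) φ W ∧ (∀ p ∈ W, (fderiv ℝ φ p).det ≠ 0) ∧
    ContDiffOn ℝ (⊤ : ℕ∞) κ W ∧ (∀ p ∈ W, κ p ≠ 0) ∧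
    ContDiffOn ℝ (⊤ : ℕ∞) lam W ∧ (∀ p ∈ W, lam p ≠ 0) ∧
    (∀ p ∈ W, ContinuousLinearMap.snd ℝ ℝ ℝ =
      κ p • ((ContinuousLinearMap.snd ℝ ℝ ℝ).comp (fderiv ℝ φ p))) ∧
    (∀ p ∈ W, f p = lam p * ((φ p).2 - (φ p).1 ^ (k + 1))) ∧
    (∃ μ : ℝ × ℝ → ℝ, ContDiffOn ℝ (⊤ : ℕ∞) μ W ∧ (∀ p ∈ W, μ p ≠ 0) ∧
      ∀ p ∈ W, f p • ((-1, 0) : ℝ × ℝ) =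
        μ p • (fderiv ℝ φ p).inverse
          (((φ p).2 - (φ p).1 ^ (k + 1)) • ((-1, 0) : ℝ × ℝ)))

open ContinuousLinearMap in
theorem kDyEquivalentToNormalForm_of_eventually {k : ℕ} {f r lam : ℝ × ℝ → ℝ} {e : ℝ}
    (he : e * e = 1)
    (h : ∀ᶠ p in 𝓝 0, ContDiffAt ℝ (⊤ : ℕ∞) r p ∧ ContDiffAt ℝ (⊤ : ℕ∞) lam p ∧ lam p ≠ 0 ∧
      r p + p.1 * fderiv ℝ r p (1, 0) ≠ 0 ∧ f p = lam p * (e * p.2 - (p.1 * r p) ^ (k + 1))) :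
    KDyEquivalentToNormalForm k f := by
  obtain ⟨W, hW, hWo, h0W⟩ := eventually_nhds_iff.1 h
  set φ : ℝ × ℝ → ℝ × ℝ := fun p => (p.1 * r p, e * p.2)
  set α : ℝ × ℝ → ℝ := fun p => r p + p.1 * fderiv ℝ r p (1, 0)
  have hr : ∀ p ∈ W, ContDiffAt ℝ (⊤ : ℕ∞) r p := fun p hp => (hW p hp).1
  have hlam : ∀ p ∈ W, ContDiffAt ℝ (⊤ : ℕ∞) lam p := fun p hp => (hW p hp).2.1
  have hlam0 : ∀ p ∈ W, lam p ≠ 0 := fun p hp => (hW p hp).2.2.1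
  have hα0 : ∀ p ∈ W, α p ≠ 0 := fun p hp => (hW p hp).2.2.2.1
  have hf : ∀ p ∈ W, f p = lam p * (e * p.2 - (p.1 * r p) ^ (k + 1)) := fun p hp =>
    (hW p hp).2.2.2.2
  have he0 : e ≠ 0 := left_ne_zero_of_mul_eq_one he
  have hφ' : ∀ p ∈ W, HasFDerivAt φ
      ((p.1 • fderiv ℝ r p + r p • fst ℝ ℝ ℝ).prod (e • snd ℝ ℝ ℝ)) p := fun p hp =>
    (hasFDerivAt_fst.mul ((hr p hp).differentiableAt (by simp)).hasFDerivAt).prodMk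
      (hasFDerivAt_snd.const_mul e)
  have hsnd : ∀ p ∈ W, snd ℝ ℝ ℝ ∘L fderiv ℝ φ p = e • snd ℝ ℝ ℝ := by
    intro p hp
    rw [(hφ' p hp).fderiv]
    ext <;> simp
  have hfst : ∀ p ∈ W, fderiv ℝ φ p (1, 0) = (α p, 0) := by
    intro p hp
    rw [(hφ' p hp).fderiv]
    ext <;> simp [α, add_comm]
  have hinv : ∀ p ∈ W, (fderiv ℝ φ p).IsInvertible := fun p hp =>
    isInvertible_of_injective
      (injective_of_snd_comp_eq_smul_snd (hα0 p hp) he0 (hsnd p hp) (hfst p hp))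
  have hα : ∀ p ∈ W, ContDiffAt ℝ (⊤ : ℕ∞) α p := fun p hp =>
    (hr p hp).add (contDiffAt_fst.mul (((hr p hp).fderiv_right le_rfl).clm_apply contDiffAt_const))
  refine ⟨φ, W, fun _ => e, lam, hWo, h0W, by simp [φ], fun p hp => ?_,
    fun p hp => (hinv p hp).det_ne_zero, contDiffOn_const, fun _ _ => he0,
    fun p hp => (hlam p hp).contDiffWithinAt, hlam0, fun p hp => ?_, hf, fun p => lam p * α p,
    fun p hp => ((hlam p hp).mul (hα p hp)).contDiffWithinAt,
    fun p hp => mul_ne_zero (hlam0 p hp) (hα0 p hp), fun p hp => ?_⟩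
  · exact ((contDiffAt_fst.mul (hr p hp)).prodMk
      (contDiffAt_const.mul contDiffAt_snd)).contDiffWithinAt
  · rw [hsnd p hp, smul_smul, he, one_smul]
  · set c := (φ p).2 - (φ p).1 ^ (k + 1)
    have hpre :
        (fderiv ℝ φ p).inverse (c • ((-1, 0) : ℝ × ℝ)) = (c / α p) • ((-1, 0) : ℝ × ℝ) := by
      rw [(hinv p hp).inverse_apply_eq, map_smul,
        show ((-1, 0) : ℝ × ℝ) = -((1, 0) : ℝ × ℝ) by simp, map_neg, hfst p hp]
      ext <;> simp [hα0 p hp]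
    have hfp : f p = lam p * c := hf p hp
    rw [hpre, smul_smul, hfp, mul_assoc, mul_div_cancel₀ _ (hα0 p hp)]

theorem exists_mul_self_eq_one_and_pos_mul {c : ℝ} (hc : c ≠ 0) :
    ∃ e : ℝ, e * e = 1 ∧ 0 < e * c := by
  rcases hc.lt_or_gt with hc | hc
  · exact ⟨-1, by norm_num, by linarith⟩
  · exact ⟨1, by norm_num, by linarith⟩

theorem kDyEquivalentToNormalForm_of_eventually_eq {k : ℕ} {f q : ℝ × ℝ → ℝ} {b : ℝ → ℝ}
    (hb : ContDiff ℝ (⊤ : ℕ∞) b) (hq : ContDiff ℝ (⊤ : ℕ∞) q) (hb0 : b 0 ≠ 0) (hq0 : q 0 ≠ 0)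
    (hf : ∀ᶠ p in 𝓝 0, f p = p.1 ^ (k + 1) * b p.1 + p.2 * q p) :
    KDyEquivalentToNormalForm k f := by
  obtain ⟨e, he, hpos⟩ :=
    exists_mul_self_eq_one_and_pos_mul (div_ne_zero (neg_ne_zero.2 hb0) hq0)
  set m : ℝ × ℝ → ℝ := fun p => e * (-b p.1 / q p)
  set r : ℝ × ℝ → ℝ := fun p => m p ^ ((k + 1 : ℕ) : ℝ)⁻¹
  have hm : ∀ p, q p ≠ 0 → ContDiffAt ℝ (⊤ : ℕ∞) m p := fun p hqp =>
    contDiffAt_const.mul ((hb.comp contDiff_fst).contDiffAt.neg.div hq.contDiffAt hqp)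
  have hr : ∀ p, q p ≠ 0 → 0 < m p → ContDiffAt ℝ (⊤ : ℕ∞) r p := fun p hqp hmp =>
    (Real.contDiffAt_rpow_const_of_ne hmp.ne').comp p (hm p hqp)
  have hm0 : 0 < m 0 := hpos
  have hr0 : 0 < r 0 + (0 : ℝ × ℝ).1 * fderiv ℝ r 0 (1, 0) := by
    simpa [r] using Real.rpow_pos_of_pos hm0 _
  have hα : ContinuousAt (fun p : ℝ × ℝ => r p + p.1 * fderiv ℝ r p (1, 0)) 0 :=
    (hr 0 hq0 hm0).continuousAt.add (continuousAt_fst.mul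
      (((hr 0 hq0 hm0).fderiv_right (m := (⊤ : ℕ∞)) le_rfl).continuousAt.clm_apply
        continuousAt_const))
  refine kDyEquivalentToNormalForm_of_eventually (r := r) (lam := fun p => e * q p) he ?_
  filter_upwards [hq.continuous.continuousAt.eventually_ne hq0,
    continuousAt_const.eventually_lt (hm 0 hq0).continuousAt hm0,
    hα.eventually_ne hr0.ne', hf] with p hqp hmp hαp hfp
  refine ⟨hr p hqp hmp, contDiffAt_const.mul hq.contDiffAt,
    mul_ne_zero (left_ne_zero_of_mul_eq_one he) hqp, hαp, ?_⟩
  rw [hfp, mul_pow, Real.rpow_inv_natCast_pow hmp.le k.succ_ne_zero]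
  have hcancel : q p * (b p.1 / q p) = b p.1 := mul_div_cancel₀ _ hqp
  simp only [m]
  linear_combination (-(p.2 * q p + p.1 ^ (k + 1) * b p.1)) * he
    - p.1 ^ (k + 1) * e ^ 2 * hcancel

theorem stmt_7_general (k : ℕ) (U : Set (ℝ × ℝ)) (hUo : IsOpen U) (hU0 : (0 : ℝ × ℝ) ∈ U)
    (f : ℝ × ℝ → ℝ) (hf : ContDiffOn ℝ (⊤ : ℕ∞) f U)
    (hfy : fderiv ℝ f 0 (0, 1) ≠ 0)
    (hflat : ∀ n ≤ k, iteratedDeriv n (fun x : ℝ => f (x, 0)) 0 = 0)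
    (hnonflat : iteratedDeriv (k + 1) (fun x : ℝ => f (x, 0)) 0 ≠ 0) :
    ∃ (φ : ℝ × ℝ → ℝ × ℝ) (W : Set (ℝ × ℝ)) (κ lam : ℝ × ℝ → ℝ),
      IsOpen W ∧ (0 : ℝ × ℝ) ∈ W ∧ φ 0 = 0 ∧
      ContDiffOn ℝ (⊤ : ℕ∞) φ W ∧ (∀ p ∈ W, (fderiv ℝ φ p).det ≠ 0) ∧
      ContDiffOn ℝ (⊤ : ℕ∞) κ W ∧ (∀ p ∈ W, κ p ≠ 0) ∧
      ContDiffOn ℝ (⊤ : ℕ∞) lam W ∧ (∀ p ∈ W, lam p ≠ 0) ∧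
      -- dy = κ·φ*(dy)
      (∀ p ∈ W, ContinuousLinearMap.snd ℝ ℝ ℝ =
        κ p • ((ContinuousLinearMap.snd ℝ ℝ ℝ).comp (fderiv ℝ φ p))) ∧
      -- f = λ·((y − x^{k+1}) ∘ φ)
      (∀ p ∈ W, f p = lam p * ((φ p).2 - (φ p).1 ^ (k + 1))) ∧
      -- consequently f·X is orbitally dy-conjugate to (y − x^{k+1})·X, X = (−1,0)
      (∃ μ : ℝ × ℝ → ℝ, ContDiffOn ℝ (⊤ : ℕ∞) μ W ∧ (∀ p ∈ W, μ p ≠ 0) ∧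
        ∀ p ∈ W, f p • ((-1, 0) : ℝ × ℝ) =
          μ p • (fderiv ℝ φ p).inverse
            (((φ p).2 - (φ p).1 ^ (k + 1)) • ((-1, 0) : ℝ × ℝ))) := by
  obtain ⟨F, hF, hFf⟩ := hf.exists_contDiff_eventuallyEq hUo hU0
  obtain ⟨q, hq, hFq, hq0⟩ :=
    exists_contDiff_eq_add_snd_smul (E := ℝ) (n := ⊤) (by simpa using hF)
  have hslice : (fun x : ℝ => F (x, 0)) =ᶠ[𝓝 0] fun x => f (x, 0) :=
    hFf.comp_tendsto (Continuous.tendsto' (by fun_prop) 0 0 rfl)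
  obtain ⟨b, hb, hFb⟩ := exists_contDiff_eq_pow_mul_of_iteratedDeriv_eq_zero
    (g := fun x => F (x, 0)) (hF.comp (contDiff_id.prodMk contDiff_const)) (k + 1)
    fun n hn => (hslice.iteratedDeriv_eq n).trans (hflat n (Nat.lt_succ_iff.1 hn))
  refine kDyEquivalentToNormalForm_of_eventually_eq hb hq ?_ ?_ ?_
  · intro hb0
    apply hnonflat
    rw [← hslice.iteratedDeriv_eq, funext hFb,
      iteratedDeriv_pow_mul_zero _ (hb.contDiffAt.of_le (by exact_mod_cast le_top)), hb0, mul_zero]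
  · rw [← Prod.mk_zero_zero, hq0, Prod.mk_zero_zero, hFf.fderiv_eq]
    exact hfy
  · filter_upwards [hFf] with p hp
    rw [← hp, hFq p, hFb, smul_eq_mul]

/-- If `f` is smooth near `0 ∈ ℝ²` with `f(0,0) = 0`, `∂f/∂y(0,0) ≠ 0`, and
`x ↦ f(x,0)` vanishes to order exactly `k+1` at `0` (zero curve regular at the
origin with contact of order `k` with the x-axis), then `f` is `K_{dy}`-equivalent
to `y − x^{k+1}`: there are a local diffeomorphism `φ` fixing `0` and smooth
nonvanishing `κ, λ` with `dy = κ·φ*(dy)` and `f = λ·((y − x^{k+1}) ∘ φ)` near `0`.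
Consequently `f·X` is orbitally `dy`-conjugate to `(y − x^{k+1})·X`, where
`X = −∂/∂x`, i.e. `X(x,y) = (−1,0)`. -/
theorem stmt_7 (k : ℕ) (U : Set (ℝ × ℝ)) (hUo : IsOpen U) (hU0 : (0 : ℝ × ℝ) ∈ U)
    (f : ℝ × ℝ → ℝ) (hf : ContDiffOn ℝ (⊤ : ℕ∞) f U)
    (hf0 : f 0 = 0) (hfy : fderiv ℝ f 0 (0, 1) ≠ 0)
    (hflat : ∀ n ≤ k, iteratedDeriv n (fun x : ℝ => f (x, 0)) 0 = 0)
    (hnonflat : iteratedDeriv (k + 1) (fun x : ℝ => f (x, 0)) 0 ≠ 0) :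
    ∃ (φ : ℝ × ℝ → ℝ × ℝ) (W : Set (ℝ × ℝ)) (κ lam : ℝ × ℝ → ℝ),
      IsOpen W ∧ (0 : ℝ × ℝ) ∈ W ∧ φ 0 = 0 ∧
      ContDiffOn ℝ (⊤ : ℕ∞) φ W ∧ (∀ p ∈ W, (fderiv ℝ φ p).det ≠ 0) ∧
      ContDiffOn ℝ (⊤ : ℕ∞) κ W ∧ (∀ p ∈ W, κ p ≠ 0) ∧
      ContDiffOn ℝ (⊤ : ℕ∞) lam W ∧ (∀ p ∈ W, lam p ≠ 0) ∧
      -- dy = κ·φ*(dy)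
      (∀ p ∈ W, ContinuousLinearMap.snd ℝ ℝ ℝ =
        κ p • ((ContinuousLinearMap.snd ℝ ℝ ℝ).comp (fderiv ℝ φ p))) ∧
      -- f = λ·((y − x^{k+1}) ∘ φ)
      (∀ p ∈ W, f p = lam p * ((φ p).2 - (φ p).1 ^ (k + 1))) ∧
      -- consequently f·X is orbitally dy-conjugate to (y − x^{k+1})·X, X = (−1,0)
      (∃ μ : ℝ × ℝ → ℝ, ContDiffOn ℝ (⊤ : ℕ∞) μ W ∧ (∀ p ∈ W, μ p ≠ 0) ∧
        ∀ p ∈ W, f p • ((-1, 0) : ℝ × ℝ) =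
          μ p • (fderiv ℝ φ p).inverse
            (((φ p).2 - (φ p).1 ^ (k + 1)) • ((-1, 0) : ℝ × ℝ))) :=
  stmt_7_general k U hUo hU0 f hf hfy hflat hnonflat
end

section
/- There is no smooth function f defined on a neighborhood U of 0 ∈ ℝ² with f(0,0) = 0 and ∇f(0,0) ≠ (0,0) such that −y·∂f/∂x(x,y) + x·∂f/∂y(x,y) = 0 for every point (x,y) ∈ U with f(x,y) = 0. In other words, the rotational vector field X(x,y) = (−y, x) cannot be tangent, at every point of the curve, to a curve {f = 0} that is regular at the origin. -/
/-!
Let `g = df(X)` with `X(x, y) = (-y, x)`. Since `X` vanishes at the origin, `dg(0) = df(0) ∘ X`.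
By hypothesis `g` vanishes on the curve `{f = 0}`, which the implicit function theorem
parametrizes near the origin by a map with derivative the inclusion of `ker df(0)`; hence
`df(0) ∘ X` kills `ker df(0)`. If `df(0) = (a, b)`, then `(b, -a) ∈ ker df(0)` is rotated to
`(a, b)`, giving `a² + b² = 0`.
-/

open Filter Topology

theorem HasStrictFDerivAt.ker_le_ker_of_eventually_eq_zero_on_fiber
    {𝕜 E F G : Type*} [NontriviallyNormedField 𝕜] [CompleteSpace 𝕜]
    [NormedAddCommGroup E] [NormedSpace 𝕜 E] [CompleteSpace E]
    [NormedAddCommGroup F] [NormedSpace 𝕜 F] [FiniteDimensional 𝕜 F]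
    [NormedAddCommGroup G] [NormedSpace 𝕜 G]
    {f : E → F} {f' : E →L[𝕜] F} {a : E} (hf : HasStrictFDerivAt f f' a) (hf' : f'.range = ⊤)
    {g : E → G} {g' : E →L[𝕜] G} (hg : HasFDerivAt g g' a)
    (hzero : ∀ᶠ p in 𝓝 a, f p = f a → g p = 0) :
    f'.ker ≤ g'.ker := by
  set φ := hf.implicitFunction f f' hf' (f a)
  have hφ0 : φ 0 = a := hf.implicitFunction_apply_image hf'
  have hφ : HasFDerivAt φ f'.ker.subtypeL 0 := (hf.to_implicitFunction hf').hasFDerivAt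
  have hφ_tendsto : Tendsto φ (𝓝 0) (𝓝 a) := hφ0 ▸ hφ.continuousAt.tendsto
  have hφ_fiber : ∀ᶠ z in 𝓝 (0 : f'.ker), f (φ z) = f a :=
    (tendsto_const_nhds.prodMk_nhds tendsto_id).eventually (hf.map_implicitFunction_eq hf')
  have hgφ_zero : g ∘ φ =ᶠ[𝓝 0] fun _ => 0 := by
    filter_upwards [hφ_tendsto.eventually hzero, hφ_fiber] with z hz hfz using hz hfz
  have hgφ : HasFDerivAt (g ∘ φ) (g'.comp f'.ker.subtypeL) 0 := (hφ0 ▸ hg).comp 0 hφ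
  have hcomp : g'.comp f'.ker.subtypeL = 0 :=
    hgφ.unique ((hasFDerivAt_const 0 0).congr_of_eventuallyEq hgφ_zero)
  intro v hv
  exact congr($hcomp ⟨v, hv⟩)

theorem hasFDerivAt_fderiv_apply_clm_of_map_eq_zero
    {𝕜 E F : Type*} [NontriviallyNormedField 𝕜]
    [NormedAddCommGroup E] [NormedSpace 𝕜 E] [NormedAddCommGroup F] [NormedSpace 𝕜 F]
    {f : E → F} {a : E} (hf : DifferentiableAt 𝕜 (fderiv 𝕜 f) a) (X : E →L[𝕜] E) (hX : X a = 0) :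
    HasFDerivAt (fun p => fderiv 𝕜 f p (X p)) ((fderiv 𝕜 f a).comp X) a := by
  simpa [hX] using hf.hasFDerivAt.clm_apply X.hasFDerivAt

def rotationQuarter : ℝ × ℝ →L[ℝ] ℝ × ℝ :=
  (-ContinuousLinearMap.snd ℝ ℝ ℝ).prod (ContinuousLinearMap.fst ℝ ℝ ℝ)

@[simp]
theorem rotationQuarter_apply (p : ℝ × ℝ) : rotationQuarter p = (-p.2, p.1) := rfl

theorem ContinuousLinearMap.apply_prod_eq (φ : ℝ × ℝ →L[ℝ] ℝ) (x y : ℝ) :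
    φ (x, y) = x * φ (1, 0) + y * φ (0, 1) := by
  rw [← smul_eq_mul, ← smul_eq_mul, ← map_smul, ← map_smul, ← map_add]
  simp

theorem eq_zero_of_ker_le_ker_comp_rotationQuarter (φ : ℝ × ℝ →L[ℝ] ℝ)
    (h : φ.ker ≤ (φ.comp rotationQuarter).ker) : φ = 0 := by
  set a := φ (1, 0)
  set b := φ (0, 1)
  have hker : φ (b, -a) = 0 := by rw [φ.apply_prod_eq]; ring
  have hsq : a * a + b * b = 0 := by
    have hrot : φ (a, b) = 0 := by simpa using h hker
    rwa [φ.apply_prod_eq] at hrot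
  have ha : a = 0 := by nlinarith
  have hb : b = 0 := by nlinarith
  ext
  · simpa using ha
  · simpa using hb

/-- There is no smooth function `f` on a neighborhood `U` of `0 ∈ ℝ²` with
`f(0,0) = 0` and `∇f(0,0) ≠ 0` such that `−y·∂f/∂x + x·∂f/∂y = 0` at every point
of `U` where `f = 0`: the rotational field `X(x,y) = (−y, x)` cannot be tangent,
at every point of the curve, to a curve `{f = 0}` regular at the origin. -/
theorem stmt_14 :
    ¬ ∃ (U : Set (ℝ × ℝ)) (f : ℝ × ℝ → ℝ),
        IsOpen U ∧ (0 : ℝ × ℝ) ∈ U ∧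
        ContDiffOn ℝ (⊤ : ℕ∞) f U ∧ f 0 = 0 ∧ fderiv ℝ f 0 ≠ 0 ∧
        ∀ p ∈ U, f p = 0 → fderiv ℝ f p (-p.2, p.1) = 0 := by
  rintro ⟨U, f, hU, h0U, hC, hf0, hne, htan⟩
  have hf : ContDiffAt ℝ (⊤ : ℕ∞) f 0 := hC.contDiffAt (hU.mem_nhds h0U)
  have hstrict : HasStrictFDerivAt f (fderiv ℝ f 0) 0 := hf.hasStrictFDerivAt (by simp)
  have hsurj : (fderiv ℝ f 0).range = ⊤ :=
    Module.Dual.range_eq_top_of_ne_zero (ContinuousLinearMap.coe_injective.ne hne)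
  have hlie := hasFDerivAt_fderiv_apply_clm_of_map_eq_zero
    ((hf.fderiv_right (by norm_cast)).differentiableAt one_ne_zero) rotationQuarter (map_zero _)
  refine hne (eq_zero_of_ker_le_ker_comp_rotationQuarter _
    (hstrict.ker_le_ker_of_eventually_eq_zero_on_fiber hsurj hlie ?_))
  filter_upwards [hU.mem_nhds h0U] with p hp hfp
  exact htan p hp (hfp.trans hf0)
end
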